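/- For every pair of integers p ≥ 3 and q ≥ 2, the group Γ = Δ(p,q,∞) ≅ C_p * C_q has uncountably many conjugacy classes of Neumann subgroups (and hence uncountably many conjugacy classes of maximal nonparabolic subgroups). -/

import Mathlib

def triangleRels (p q : ℕ) : Set (FreeGroup (Fin 2)) :=
  {FreeGroup.of 0 ^ p, FreeGroup.of 1 ^ q}

/-- The triangle group Δ(p,q,∞) = ⟨X, Y ∣ X^p = Y^q = 1⟩ ≅ C_p * C_q. -/
abbrev Tri (p q : ℕ) : Type := PresentedGroup (triangleRels p q)

def triX (p q : ℕ) : Tri p q := PresentedGroup.of 0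
def triY (p q : ℕ) : Tri p q := PresentedGroup.of 1
def triZ (p q : ℕ) : Tri p q := (triX p q * triY p q)⁻¹

/-- An element is parabolic if it is conjugate to a nonzero power of Z. -/
def IsParabolic {p q : ℕ} (g : Tri p q) : Prop :=
  ∃ (k : ℤ) (c : Tri p q), k ≠ 0 ∧ g = c * (triZ p q) ^ k * c⁻¹

/-- A subgroup is nonparabolic if it contains no parabolic element. -/
def Nonparabolic {p q : ℕ} (M : Subgroup (Tri p q)) : Prop :=
  ∀ g ∈ M, ¬ IsParabolic g

/-- A Neumann subgroup: a complement to P = ⟨Z⟩, i.e. M ∩ P = 1 and MP = Γ. -/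
def IsNeumann {p q : ℕ} (M : Subgroup (Tri p q)) : Prop :=
  M ⊓ Subgroup.zpowers (triZ p q) = ⊥ ∧
  ∀ g : Tri p q, ∃ m ∈ M, ∃ k : ℤ, g = m * (triZ p q) ^ k

/-- Conjugacy of subgroups (restricted to those satisfying a property `P`). -/
def conjRel {G : Type*} [Group G] (P : Subgroup G → Prop)
    (M N : {M : Subgroup G // P M}) : Prop :=
  ∃ g : G, (N : Subgroup G) = Subgroup.map (MulAut.conj g).toMonoidHom (M : Subgroup G)

/-!
If `Γ` acts on `ℤ` with `Z` acting as `n ↦ n + 1`, then `⟨Z⟩` acts simply transitively, so the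
stabilizer `M` of `0` is a complement of `⟨Z⟩`, i.e. a Neumann subgroup. It contains no
parabolic element, since every conjugate of `Z^k` (`k ≠ 0`) acts without fixed points, and any
`g ∉ M` is moved into `M` by a nonzero power of `Z`, so `M` is maximal nonparabolic.

Such actions are pairs of permutations `x`, `w = x + 1` of `ℤ` with `x^p = w^q = 1`. For every
`α : ℕ → Bool` we build one by laying out consecutive zones of the nonnegative integers, each of
one of two shapes chosen by `α`, whose cycles are closed through the negative integers. If the
stabilizers for `α` and `β` are conjugate, the two actions differ by a translation of `ℤ`; the
translation is trivial because `-1` is the only negative fixed point of `x`, and `x` determines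
`α`. Hence `α ↦ M_α` is injective on conjugacy classes, and `ℕ → Bool` is uncountable.
-/

open Function

section TranslationAction

variable {G : Type*} [Group G]

def zeroStabilizer (φ : G →* Equiv.Perm ℤ) : Subgroup G :=
  (MulAction.stabilizer (Equiv.Perm ℤ) (0 : ℤ)).comap φ

variable {φ ψ : G →* Equiv.Perm ℤ} {z : G}

lemma mem_zeroStabilizer {g : G} : g ∈ zeroStabilizer φ ↔ φ g 0 = 0 := Iff.rfl

lemma apply_zpow_of_eq_addRight (hz : φ z = Equiv.addRight 1) (k n : ℤ) :
    φ (z ^ k) n = n + k := by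
  simp [hz]

lemma zpow_mem_zeroStabilizer_iff (hz : φ z = Equiv.addRight 1) {k : ℤ} :
    z ^ k ∈ zeroStabilizer φ ↔ k = 0 := by
  rw [mem_zeroStabilizer, apply_zpow_of_eq_addRight hz]
  omega

lemma mul_zpow_mem_zeroStabilizer (hz : φ z = Equiv.addRight 1) (g : G) :
    g * z ^ (φ g⁻¹ 0) ∈ zeroStabilizer φ := by
  rw [mem_zeroStabilizer, map_mul, Equiv.Perm.mul_apply, apply_zpow_of_eq_addRight hz, zero_add,
    map_inv]
  exact Equiv.apply_symm_apply _ _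

lemma zeroStabilizer_inf_zpowers_eq_bot (hz : φ z = Equiv.addRight 1) :
    zeroStabilizer φ ⊓ Subgroup.zpowers z = ⊥ := by
  rw [eq_bot_iff]
  rintro _ ⟨hg, k, rfl⟩
  simp [(zpow_mem_zeroStabilizer_iff hz).1 hg]

lemma exists_mem_zeroStabilizer_mul_zpow (hz : φ z = Equiv.addRight 1) (g : G) :
    ∃ m ∈ zeroStabilizer φ, ∃ k : ℤ, g = m * z ^ k :=
  ⟨_, mul_zpow_mem_zeroStabilizer hz g, -(φ g⁻¹ 0), by group⟩

lemma conj_zpow_notMem_zeroStabilizer (hz : φ z = Equiv.addRight 1) (c : G) {k : ℤ}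
    (hk : k ≠ 0) : c * z ^ k * c⁻¹ ∉ zeroStabilizer φ := by
  rw [mem_zeroStabilizer, map_mul, map_mul, map_inv, Equiv.Perm.mul_apply, Equiv.Perm.mul_apply,
    ← Equiv.Perm.eq_inv_iff_eq, apply_zpow_of_eq_addRight hz]
  omega

lemma exists_zpow_mem_of_zeroStabilizer_lt (hz : φ z = Equiv.addRight 1) {N : Subgroup G}
    (h : zeroStabilizer φ < N) : ∃ k : ℤ, k ≠ 0 ∧ z ^ k ∈ N := by
  obtain ⟨g, hgN, hg⟩ := SetLike.exists_of_lt h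
  have hmem := mul_zpow_mem_zeroStabilizer hz g
  refine ⟨φ g⁻¹ 0, fun h0 => hg ?_, ?_⟩
  · rwa [h0, zpow_zero, mul_one] at hmem
  · simpa using N.mul_mem (N.inv_mem hgN) (h.le hmem)

lemma apply_eq_of_zeroStabilizer_eq_map_conj (hφ : φ z = Equiv.addRight 1)
    (hψ : ψ z = Equiv.addRight 1) {g : G}
    (h : zeroStabilizer ψ = (zeroStabilizer φ).map (MulAut.conj g).toMonoidHom) (a : G) (n : ℤ) :
    ψ a n = φ a (n + φ g 0) - φ g 0 := by
  have hmem : ∀ b, ψ b 0 = 0 → φ b (φ g 0) = φ g 0 := by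
    intro b hb
    rw [← mem_zeroStabilizer, h, Subgroup.mem_map_equiv, MulAut.conj_symm_apply,
      mem_zeroStabilizer, map_mul, map_mul, map_inv, Equiv.Perm.mul_apply, Equiv.Perm.mul_apply,
      Equiv.Perm.inv_eq_iff_eq] at hb
    exact hb
  have key := hmem (z ^ (-ψ a n) * a * z ^ n) (by
    rw [map_mul, map_mul, Equiv.Perm.mul_apply, Equiv.Perm.mul_apply,
      apply_zpow_of_eq_addRight hψ, apply_zpow_of_eq_addRight hψ, zero_add, add_neg_cancel])
  rw [map_mul, map_mul, Equiv.Perm.mul_apply, Equiv.Perm.mul_apply,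
    apply_zpow_of_eq_addRight hφ, apply_zpow_of_eq_addRight hφ, add_comm (φ g 0)] at key
  omega

end TranslationAction

section Triangle

variable {p q : ℕ} {φ : Tri p q →* Equiv.Perm ℤ}

lemma isNeumann_zeroStabilizer (hz : φ (triZ p q) = Equiv.addRight 1) :
    IsNeumann (zeroStabilizer φ) :=
  ⟨zeroStabilizer_inf_zpowers_eq_bot hz, exists_mem_zeroStabilizer_mul_zpow hz⟩

lemma nonparabolic_zeroStabilizer (hz : φ (triZ p q) = Equiv.addRight 1) :
    Nonparabolic (zeroStabilizer φ) := by
  rintro _ hg ⟨k, c, hk, rfl⟩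
  exact conj_zpow_notMem_zeroStabilizer hz c hk hg

lemma exists_isParabolic_of_zeroStabilizer_lt (hz : φ (triZ p q) = Equiv.addRight 1)
    {N : Subgroup (Tri p q)} (h : zeroStabilizer φ < N) : ∃ g ∈ N, IsParabolic g := by
  obtain ⟨k, hk, hkN⟩ := exists_zpow_mem_of_zeroStabilizer_lt hz h
  exact ⟨_, hkN, k, 1, hk, by simp⟩

end Triangle

lemma conjRel_equivalence {G : Type*} [Group G] (P : Subgroup G → Prop) :
    Equivalence (conjRel P) where
  refl _ := ⟨1, by ext; simp⟩
  symm := by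
    rintro M N ⟨g, hg⟩
    refine ⟨g⁻¹, ?_⟩
    ext x
    rw [hg, Subgroup.mem_map_equiv, Subgroup.mem_map_equiv]
    simp [mul_assoc]
  trans := by
    rintro M N O ⟨g, hg⟩ ⟨g', hg'⟩
    refine ⟨g' * g, ?_⟩
    ext x
    rw [hg', hg, Subgroup.mem_map_equiv, Subgroup.mem_map_equiv, Subgroup.mem_map_equiv]
    simp only [MulAut.conj_symm_apply, mul_inv_rev, mul_assoc]

lemma uncountable_quot_conjRel {G ι : Type*} [Group G] [Uncountable ι] {P : Subgroup G → Prop}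
    (M : ι → Subgroup G) (hM : ∀ i, P (M i))
    (hconj : ∀ i j (g : G), M j = (M i).map (MulAut.conj g).toMonoidHom → i = j) :
    Uncountable (Quot (conjRel P)) := by
  refine Injective.uncountable (f := fun i => Quot.mk (conjRel P) ⟨M i, hM i⟩) fun i j hij => ?_
  obtain ⟨g, hg⟩ := (conjRel_equivalence P).eqvGen_iff.1 (Quot.eq.1 hij)
  exact hconj i j g hg

instance : Uncountable (ℕ → Bool) := by
  rw [← Cardinal.aleph0_lt_mk_iff]
  simpa using Cardinal.cantor Cardinal.aleph0

lemma bijective_of_iterate_eq_self {α : Type*} {f : α → α} {n : ℕ} (hn : n ≠ 0)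
    (h : ∀ a, f^[n] a = a) : Bijective f := by
  obtain ⟨m, rfl⟩ := Nat.exists_eq_succ_of_ne_zero hn
  exact ⟨LeftInverse.injective (g := f^[m]) fun a => by rw [← iterate_succ_apply, h],
    RightInverse.surjective (g := f^[m]) fun a => by rw [← iterate_succ_apply' f, h]⟩

lemma isPeriodicPt_of_iterate_pred {α : Type*} {f : α → α} {n : ℕ} {x y : α} (hn : n ≠ 0)
    (hy : f^[n - 1] x = y) (hx : f y = x) : IsPeriodicPt f n x := by
  obtain ⟨m, rfl⟩ := Nat.exists_eq_succ_of_ne_zero hn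
  rw [Nat.succ_sub_one] at hy
  rw [IsPeriodicPt, IsFixedPt, iterate_succ_apply', hy, hx]

section Runs

variable {f : ℤ → ℤ} {t : ℤ} {m r : ℕ}

lemma iterate_eq_sub_of_forall (h : ∀ i : ℕ, i < r → f (t - i) = t - i - 1) :
    f^[r] t = t - r := by
  induction r with
  | zero => simp
  | succ r ih =>
    rw [iterate_succ_apply', ih fun i hi => h i (by omega), h r (by omega)]
    push_cast
    ring

lemma iterate_eq_add_of_forall (h : ∀ i : ℕ, i < r → f (t + i) = t + i + 1) :
    f^[r] t = t + r := by
  induction r with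
  | zero => simp
  | succ r ih =>
    rw [iterate_succ_apply', ih fun i hi => h i (by omega), h r (by omega)]
    push_cast
    ring

lemma isPeriodicPt_of_forall_sub (hper : IsPeriodicPt f m t)
    (h : ∀ i : ℕ, i < r → f (t - i) = t - i - 1) {n : ℤ} (hn₁ : t - r ≤ n) (hn₂ : n ≤ t) :
    IsPeriodicPt f m n := by
  have hrun := iterate_eq_sub_of_forall (f := f) (t := t) (r := (t - n).toNat)
    fun i hi => h i (by omega)
  rw [show n = t - (t - n).toNat by omega, ← hrun]
  exact hper.apply_iterate _

lemma isPeriodicPt_of_forall_add (hper : IsPeriodicPt f m t)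
    (h : ∀ i : ℕ, i < r → f (t + i) = t + i + 1) {n : ℤ} (hn₁ : t ≤ n) (hn₂ : n ≤ t + r) :
    IsPeriodicPt f m n := by
  have hrun := iterate_eq_add_of_forall (f := f) (t := t) (r := (n - t).toNat)
    fun i hi => h i (by omega)
  rw [show n = t + (n - t).toNat by omega, ← hrun]
  exact hper.apply_iterate _

end Runs

namespace Neumann

variable (p q : ℕ) (α : ℕ → Bool)

def zoneLength (b : Bool) : ℤ := if b then 2 * (p + q - 3) + 1 else p + q - 3

def zoneStart : ℕ → ℤ
  | 0 => 0
  | k + 1 => zoneStart k + zoneLength p q (α k)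

open Classical in
noncomputable def zoneOf (n : ℤ) : ℕ :=
  if h : ∃ k, n < zoneStart p q α (k + 1) then Nat.find h else 0

def cellOffset (b : Bool) (j : ℤ) : ℤ :=
  if j < q - 2 then j
  else if b = false then j - 1
  else if j = q - 1 then p + q - 2
  else if j < p + q - 1 then j - 1
  else if j < p + 2 * q - 3 then j
  else if j = p + 2 * q - 3 then q - 2
  else j - 1

/-- The permutation by which `X` acts. The integers `n ≥ 0` are cut into consecutive zones,
zone `k` being standard (length `p + q - 3`) or variant (length `2 (p + q - 3) + 1`) according
to `α k`. Writing `j` for the offset in zone `k`, the `p`-cycle through `-k - 2` descends from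
the last offset to `j = q - 2` and returns to `-k - 2`; in a variant zone the descent jumps from
`p + 2q - 3` to `q - 2`, over a block carrying a second `p`-cycle
`q - 1 ↦ p + q - 2 ↦ ⋯ ↦ q ↦ q - 1`. -/
noncomputable def xFun (n : ℤ) : ℤ :=
  if n < -1 then zoneStart p q α ((-n - 2).toNat + 1) - 1
  else if n = -1 then -1
  else if n - zoneStart p q α (zoneOf p q α n) = q - 2 then -(zoneOf p q α n : ℤ) - 2
  else zoneStart p q α (zoneOf p q α n) +
    cellOffset p q (α (zoneOf p q α n)) (n - zoneStart p q α (zoneOf p q α n))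

noncomputable def wFun (n : ℤ) : ℤ := xFun p q α n + 1

variable {p q α}

lemma zoneStart_succ (k : ℕ) :
    zoneStart p q α (k + 1) = zoneStart p q α k + zoneLength p q (α k) := rfl

lemma zoneLength_false : zoneLength p q false = p + q - 3 := rfl

lemma zoneLength_true : zoneLength p q true = 2 * (p + q - 3) + 1 := rfl

lemma zoneLength_pos (hp : 3 ≤ p) (hq : 2 ≤ q) (b : Bool) : 0 < zoneLength p q b := by
  cases b <;> simp only [zoneLength_false, zoneLength_true] <;> omega

lemma zoneStart_monotone (hp : 3 ≤ p) (hq : 2 ≤ q) : Monotone (zoneStart p q α) :=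
  monotone_nat_of_le_succ fun k => by
    have := zoneLength_pos hp hq (α k)
    rw [zoneStart_succ]
    omega

lemma le_zoneStart (hp : 3 ≤ p) (hq : 2 ≤ q) (k : ℕ) : (k : ℤ) ≤ zoneStart p q α k := by
  induction k with
  | zero => simp [zoneStart]
  | succ k ih =>
    have := zoneLength_pos hp hq (α k)
    rw [zoneStart_succ]
    push_cast
    omega

lemma exists_zone (hp : 3 ≤ p) (hq : 2 ≤ q) {n : ℤ} (hn : 0 ≤ n) :
    ∃ k, zoneStart p q α k ≤ n ∧ n < zoneStart p q α (k + 1) := by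
  have hex : ∃ k, n < zoneStart p q α (k + 1) := ⟨n.toNat, by
    have := le_zoneStart (α := α) hp hq (n.toNat + 1)
    push_cast at this
    omega⟩
  refine ⟨Nat.find hex, ?_, Nat.find_spec hex⟩
  cases h : Nat.find hex with
  | zero => simpa [zoneStart] using hn
  | succ k =>
    have := Nat.find_min hex (show k < Nat.find hex by omega)
    omega

lemma zoneOf_eq (hp : 3 ≤ p) (hq : 2 ≤ q) {n : ℤ} {k : ℕ} (h₁ : zoneStart p q α k ≤ n)
    (h₂ : n < zoneStart p q α (k + 1)) : zoneOf p q α n = k := by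
  have hex : ∃ k, n < zoneStart p q α (k + 1) := ⟨k, h₂⟩
  rw [zoneOf, dif_pos hex]
  refine le_antisymm (Nat.find_min' hex h₂) (not_lt.1 fun hlt => ?_)
  have := zoneStart_monotone (α := α) hp hq (show Nat.find hex + 1 ≤ k by omega)
  have := Nat.find_spec hex
  omega

lemma xFun_neg_one : xFun p q α (-1) = -1 := by
  simp [xFun]

lemma xFun_neg_sub_two (k : ℕ) : xFun p q α (-k - 2) = zoneStart p q α (k + 1) - 1 := by
  rw [xFun, if_pos (by omega), show (-(-(k : ℤ) - 2) - 2).toNat = k by omega]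

lemma wFun_neg_sub_one (k : ℕ) : wFun p q α (-k - 1) = zoneStart p q α k := by
  cases k with
  | zero => simp [wFun, xFun_neg_one, zoneStart]
  | succ k =>
    rw [wFun, show -((k + 1 : ℕ) : ℤ) - 1 = -k - 2 by push_cast; ring, xFun_neg_sub_two]
    ring

section Zone

variable (hp : 3 ≤ p) (hq : 2 ≤ q) {k : ℕ} {n : ℤ}
include hp hq

lemma xFun_of_mem_zone (h₁ : zoneStart p q α k ≤ n) (h₂ : n < zoneStart p q α (k + 1)) :
    xFun p q α n = if n - zoneStart p q α k = q - 2 then -(k : ℤ) - 2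
      else zoneStart p q α k + cellOffset p q (α k) (n - zoneStart p q α k) := by
  have := le_zoneStart (α := α) hp hq k
  rw [xFun, if_neg (by omega), if_neg (by omega), zoneOf_eq hp hq h₁ h₂]

lemma xFun_of_lt_q_sub_two (h₁ : zoneStart p q α k ≤ n) (h₂ : n < zoneStart p q α k + (q - 2)) :
    xFun p q α n = n := by
  rw [xFun_of_mem_zone (k := k) hp hq h₁ (by
    rw [zoneStart_succ]; cases α k <;> simp only [zoneLength_false, zoneLength_true] <;> omega),
    cellOffset]
  split_ifs <;> omega

lemma xFun_q_sub_two : xFun p q α (zoneStart p q α k + (q - 2)) = -(k : ℤ) - 2 := by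
  rw [xFun_of_mem_zone (k := k) hp hq (by omega) (by
    rw [zoneStart_succ]; cases α k <;> simp only [zoneLength_false, zoneLength_true] <;> omega)]
  simp

lemma xFun_standard (hk : α k = false) (h₁ : zoneStart p q α k + (q - 1) ≤ n)
    (h₂ : n < zoneStart p q α k + (p + q - 3)) : xFun p q α n = n - 1 := by
  rw [xFun_of_mem_zone (k := k) hp hq (by omega)
    (by rw [zoneStart_succ, hk, zoneLength_false]; omega), cellOffset]
  simp only [hk, reduceIte]
  split_ifs <;> omega

variable (hk : α k = true)
include hk

lemma xFun_variant_hook :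
    xFun p q α (zoneStart p q α k + (q - 1)) = zoneStart p q α k + (p + q - 2) := by
  rw [xFun_of_mem_zone (k := k) hp hq (by omega)
    (by rw [zoneStart_succ, hk, zoneLength_true]; omega), cellOffset]
  simp only [hk, reduceCtorEq, reduceIte]
  split_ifs <;> omega

lemma xFun_variant_inner (h₁ : zoneStart p q α k + q ≤ n)
    (h₂ : n < zoneStart p q α k + (p + q - 1)) : xFun p q α n = n - 1 := by
  rw [xFun_of_mem_zone (k := k) hp hq (by omega)
    (by rw [zoneStart_succ, hk, zoneLength_true]; omega), cellOffset]
  simp only [hk, reduceCtorEq, reduceIte]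
  split_ifs <;> omega

lemma xFun_variant_block (h₁ : zoneStart p q α k + (p + q - 1) ≤ n)
    (h₂ : n < zoneStart p q α k + (p + 2 * q - 3)) : xFun p q α n = n := by
  rw [xFun_of_mem_zone (k := k) hp hq (by omega)
    (by rw [zoneStart_succ, hk, zoneLength_true]; omega), cellOffset]
  simp only [hk, reduceCtorEq, reduceIte]
  split_ifs <;> omega

lemma xFun_variant_jump :
    xFun p q α (zoneStart p q α k + (p + 2 * q - 3)) = zoneStart p q α k + (q - 2) := by
  rw [xFun_of_mem_zone (k := k) hp hq (by omega)
    (by rw [zoneStart_succ, hk, zoneLength_true]; omega), cellOffset]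
  simp only [hk, reduceCtorEq, reduceIte]
  split_ifs <;> omega

lemma xFun_variant_outer (h₁ : zoneStart p q α k + (p + 2 * q - 3) < n)
    (h₂ : n ≤ zoneStart p q α k + 2 * (p + q - 3)) : xFun p q α n = n - 1 := by
  rw [xFun_of_mem_zone (k := k) hp hq (by omega)
    (by rw [zoneStart_succ, hk, zoneLength_true]; omega), cellOffset]
  simp only [hk, reduceCtorEq, reduceIte]
  split_ifs <;> omega

omit hk

lemma isPeriodicPt_xFun_standard (hk : α k = false)
    (hn : n = -k - 2 ∨ zoneStart p q α k + (q - 2) ≤ n ∧ n < zoneStart p q α k + (p + q - 3)) :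
    IsPeriodicPt (xFun p q α) p n := by
  set s := zoneStart p q α k
  have hdesc : ∀ i : ℕ, i < p - 2 → xFun p q α (s + (p + q - 4) - i) = s + (p + q - 4) - i - 1 :=
    fun i hi => xFun_standard hp hq hk (by omega) (by omega)
  have hexit : (xFun p q α)^[p - 1] (s + (p + q - 4)) = -k - 2 := by
    rw [show p - 1 = (p - 2) + 1 by omega, iterate_succ_apply', iterate_eq_sub_of_forall hdesc,
      show s + (p + q - 4) - ((p - 2 : ℕ) : ℤ) = s + (q - 2) by omega, xFun_q_sub_two hp hq]
  have hper : IsPeriodicPt (xFun p q α) p (s + (p + q - 4)) :=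
    isPeriodicPt_of_iterate_pred (by omega) hexit (by
      rw [xFun_neg_sub_two, zoneStart_succ, hk, zoneLength_false]
      ring)
  rcases hn with rfl | ⟨h₁, h₂⟩
  · exact hexit ▸ hper.apply_iterate _
  · exact isPeriodicPt_of_forall_sub hper hdesc (by omega) (by omega)

lemma isPeriodicPt_xFun_variant_outer (hk : α k = true)
    (hn : n = -k - 2 ∨ n = zoneStart p q α k + (q - 2) ∨
      zoneStart p q α k + (p + 2 * q - 3) ≤ n ∧ n ≤ zoneStart p q α k + 2 * (p + q - 3)) :
    IsPeriodicPt (xFun p q α) p n := by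
  set s := zoneStart p q α k
  have hdesc : ∀ i : ℕ, i < p - 3 →
      xFun p q α (s + 2 * (p + q - 3) - i) = s + 2 * (p + q - 3) - i - 1 :=
    fun i hi => xFun_variant_outer hp hq hk (by omega) (by omega)
  have hjump : (xFun p q α)^[p - 2] (s + 2 * (p + q - 3)) = s + (q - 2) := by
    rw [show p - 2 = (p - 3) + 1 by omega, iterate_succ_apply', iterate_eq_sub_of_forall hdesc,
      show s + 2 * (p + q - 3) - ((p - 3 : ℕ) : ℤ) = s + (p + 2 * q - 3) by omega,
      xFun_variant_jump hp hq hk]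
  have hexit : (xFun p q α)^[p - 1] (s + 2 * (p + q - 3)) = -k - 2 := by
    rw [show p - 1 = (p - 2) + 1 by omega, iterate_succ_apply', hjump, xFun_q_sub_two hp hq]
  have hper : IsPeriodicPt (xFun p q α) p (s + 2 * (p + q - 3)) :=
    isPeriodicPt_of_iterate_pred (by omega) hexit (by
      rw [xFun_neg_sub_two, zoneStart_succ, hk, zoneLength_true]
      ring)
  rcases hn with rfl | rfl | ⟨h₁, h₂⟩
  · exact hexit ▸ hper.apply_iterate _
  · exact hjump ▸ hper.apply_iterate _
  · exact isPeriodicPt_of_forall_sub hper hdesc (by omega) (by omega)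

lemma isPeriodicPt_xFun_variant_inner (hk : α k = true)
    (h₁ : zoneStart p q α k + (q - 1) ≤ n) (h₂ : n ≤ zoneStart p q α k + (p + q - 2)) :
    IsPeriodicPt (xFun p q α) p n := by
  set s := zoneStart p q α k
  have hdesc : ∀ i : ℕ, i < p - 1 →
      xFun p q α (s + (p + q - 2) - i) = s + (p + q - 2) - i - 1 :=
    fun i hi => xFun_variant_inner hp hq hk (by omega) (by omega)
  have hper : IsPeriodicPt (xFun p q α) p (s + (p + q - 2)) :=
    isPeriodicPt_of_iterate_pred (by omega) (by rw [iterate_eq_sub_of_forall hdesc]; omega)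
      (xFun_variant_hook hp hq hk)
  exact isPeriodicPt_of_forall_sub hper hdesc (by omega) h₂

lemma xFun_iterate (n : ℤ) : (xFun p q α)^[p] n = n := by
  rcases lt_trichotomy n (-1) with h | rfl | h
  · obtain ⟨k, rfl⟩ : ∃ k : ℕ, n = -k - 2 := ⟨(-n - 2).toNat, by omega⟩
    cases hk : α k
    · exact isPeriodicPt_xFun_standard hp hq hk (.inl rfl)
    · exact isPeriodicPt_xFun_variant_outer hp hq hk (.inl rfl)
  · exact iterate_fixed xFun_neg_one p
  obtain ⟨k, h₁, h₂⟩ := exists_zone (α := α) hp hq (by omega : 0 ≤ n)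
  rw [zoneStart_succ] at h₂
  rcases lt_or_ge n (zoneStart p q α k + (q - 2)) with h₃ | h₃
  · exact iterate_fixed (xFun_of_lt_q_sub_two hp hq h₁ h₃) p
  cases hk : α k
  · rw [hk, zoneLength_false] at h₂
    exact isPeriodicPt_xFun_standard hp hq hk (.inr ⟨h₃, h₂⟩)
  rw [hk, zoneLength_true] at h₂
  by_cases h₄ : n = zoneStart p q α k + (q - 2) ∨ zoneStart p q α k + (p + 2 * q - 3) ≤ n
  · exact isPeriodicPt_xFun_variant_outer hp hq hk (by omega)
  by_cases h₅ : n ≤ zoneStart p q α k + (p + q - 2)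
  · exact isPeriodicPt_xFun_variant_inner hp hq hk (by omega) h₅
  · exact iterate_fixed (xFun_variant_block hp hq hk (by omega) (by omega)) p

lemma isPeriodicPt_wFun_chain
    (hn : n = -k - 1 ∨ zoneStart p q α k ≤ n ∧ n ≤ zoneStart p q α k + (q - 2)) :
    IsPeriodicPt (wFun p q α) q n := by
  set s := zoneStart p q α k
  have hasc : ∀ i : ℕ, i < q - 2 → wFun p q α (s + i) = s + i + 1 :=
    fun i hi => by rw [wFun, xFun_of_lt_q_sub_two (k := k) hp hq (by omega) (by omega)]
  have hexit : (wFun p q α)^[q - 1] s = -k - 1 := by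
    rw [show q - 1 = (q - 2) + 1 by omega, iterate_succ_apply', iterate_eq_add_of_forall hasc,
      show s + ((q - 2 : ℕ) : ℤ) = s + (q - 2) by omega, wFun, xFun_q_sub_two hp hq]
    ring
  have hper : IsPeriodicPt (wFun p q α) q s :=
    isPeriodicPt_of_iterate_pred (by omega) hexit (wFun_neg_sub_one k)
  rcases hn with rfl | ⟨h₁, h₂⟩
  · exact hexit ▸ hper.apply_iterate _
  · exact isPeriodicPt_of_forall_add hper hasc h₁ (by omega)

lemma isPeriodicPt_wFun_variant (hk : α k = true)
    (hn : n = zoneStart p q α k + (q - 1) ∨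
      zoneStart p q α k + (p + q - 1) ≤ n ∧ n ≤ zoneStart p q α k + (p + 2 * q - 3)) :
    IsPeriodicPt (wFun p q α) q n := by
  set s := zoneStart p q α k
  have hasc : ∀ i : ℕ, i < q - 2 → wFun p q α (s + (p + q - 1) + i) = s + (p + q - 1) + i + 1 :=
    fun i hi => by rw [wFun, xFun_variant_block hp hq hk (by omega) (by omega)]
  have hjump : (wFun p q α)^[q - 1] (s + (p + q - 1)) = s + (q - 1) := by
    rw [show q - 1 = (q - 2) + 1 by omega, iterate_succ_apply', iterate_eq_add_of_forall hasc,
      show s + (p + q - 1) + ((q - 2 : ℕ) : ℤ) = s + (p + 2 * q - 3) by omega, wFun,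
      xFun_variant_jump hp hq hk]
    ring
  have hper : IsPeriodicPt (wFun p q α) q (s + (p + q - 1)) :=
    isPeriodicPt_of_iterate_pred (by omega) hjump (by rw [wFun, xFun_variant_hook hp hq hk]; ring)
  rcases hn with rfl | ⟨h₁, h₂⟩
  · exact hjump ▸ hper.apply_iterate _
  · exact isPeriodicPt_of_forall_add hper hasc h₁ (by omega)

lemma wFun_iterate (n : ℤ) : (wFun p q α)^[q] n = n := by
  rcases lt_or_ge n 0 with h | h
  · obtain ⟨k, rfl⟩ : ∃ k : ℕ, n = -k - 1 := ⟨(-n - 1).toNat, by omega⟩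
    exact isPeriodicPt_wFun_chain hp hq (.inl rfl)
  obtain ⟨k, h₁, h₂⟩ := exists_zone (α := α) hp hq h
  rw [zoneStart_succ] at h₂
  rcases le_or_gt n (zoneStart p q α k + (q - 2)) with h₃ | h₃
  · exact isPeriodicPt_wFun_chain hp hq (.inr ⟨h₁, h₃⟩)
  have hfixed : xFun p q α n = n - 1 → IsPeriodicPt (wFun p q α) q n := fun hx =>
    iterate_fixed (by rw [wFun, hx]; ring) q
  cases hk : α k
  · rw [hk, zoneLength_false] at h₂
    exact hfixed (xFun_standard hp hq hk (by omega) h₂)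
  rw [hk, zoneLength_true] at h₂
  by_cases h₄ : n = zoneStart p q α k + (q - 1) ∨
      zoneStart p q α k + (p + q - 1) ≤ n ∧ n ≤ zoneStart p q α k + (p + 2 * q - 3)
  · exact isPeriodicPt_wFun_variant hp hq hk h₄
  by_cases h₅ : n < zoneStart p q α k + (p + q - 1)
  · exact hfixed (xFun_variant_inner hp hq hk (by omega) h₅)
  · exact hfixed (xFun_variant_outer hp hq hk (by omega) (by omega))

end Zone

section Action

variable (hp : 3 ≤ p) (hq : 2 ≤ q) (α)

noncomputable def xPerm : Equiv.Perm ℤ :=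
  Equiv.ofBijective (xFun p q α) (bijective_of_iterate_eq_self (by omega) (xFun_iterate hp hq))

lemma xPerm_pow : xPerm α hp hq ^ p = 1 :=
  Equiv.ext fun n => by rw [← Equiv.Perm.iterate_eq_pow]; exact xFun_iterate hp hq n

lemma addRight_mul_xPerm_pow : (Equiv.addRight 1 * xPerm α hp hq) ^ q = 1 :=
  Equiv.ext fun n => by rw [← Equiv.Perm.iterate_eq_pow]; exact wFun_iterate hp hq n

noncomputable def action : Tri p q →* Equiv.Perm ℤ :=
  PresentedGroup.toGroup (f := ![xPerm α hp hq, (Equiv.addRight 1 * xPerm α hp hq)⁻¹]) <| by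
    rintro r (rfl | rfl)
    · simpa using xPerm_pow α hp hq
    · rw [map_pow, FreeGroup.lift_apply_of]
      change ((Equiv.addRight 1 * xPerm α hp hq)⁻¹) ^ q = 1
      rw [inv_pow, addRight_mul_xPerm_pow, inv_one]

lemma action_triX : action α hp hq (triX p q) = xPerm α hp hq :=
  PresentedGroup.toGroup.of _

lemma action_triZ : action α hp hq (triZ p q) = Equiv.addRight 1 := by
  rw [triZ, map_inv, map_mul, action_triX, triY, action, PresentedGroup.toGroup.of]
  simp

section Rigidity

variable {β : ℕ → Bool}
include hp hq

lemma xFun_ne_self {n : ℤ} (hn : n < -1) : xFun p q α n ≠ n := by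
  obtain ⟨k, rfl⟩ : ∃ k : ℕ, n = -k - 2 := ⟨(-n - 2).toNat, by omega⟩
  have := le_zoneStart (α := α) hp hq (k + 1)
  rw [xFun_neg_sub_two]
  push_cast at this
  omega

lemma xFun_q_sub_one (k : ℕ) :
    xFun p q α (zoneStart p q α k + (q - 1)) =
      if α k then zoneStart p q α k + (p + q - 2) else zoneStart p q α k + (q - 2) := by
  cases hk : α k
  · rw [xFun_standard hp hq hk le_rfl (by omega), if_neg (by simp)]
    ring
  · rw [xFun_variant_hook hp hq hk, if_pos rfl]

lemma eq_of_xFun_eq (h : xFun p q α = xFun p q β) : α = β := by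
  have hbit : ∀ k, zoneStart p q α k = zoneStart p q β k → α k = β k := by
    intro k hs
    have := xFun_q_sub_one α hp hq k
    rw [h, hs, xFun_q_sub_one β hp hq] at this
    revert this
    cases α k <;> cases β k <;> simp <;> omega
  have hstart : ∀ k, zoneStart p q α k = zoneStart p q β k := by
    intro k
    induction k with
    | zero => rfl
    | succ k ih => rw [zoneStart_succ, zoneStart_succ, ih, hbit k ih]
  exact funext fun k => hbit k (hstart k)

lemma eq_of_xFun_conj {c : ℤ} (h : ∀ n, xFun p q β n = xFun p q α (n + c) - c) : α = β := by
  have h₁ := h (-1)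
  have h₂ := h (-1 - c)
  rw [xFun_neg_one] at h₁
  rw [sub_add_cancel, xFun_neg_one] at h₂
  obtain rfl : c = 0 := by
    by_contra hc
    rcases lt_or_gt_of_ne hc with hc | hc
    · exact xFun_ne_self α hp hq (show -1 + c < -1 by omega) (by omega)
    · exact xFun_ne_self β hp hq (show -1 - c < -1 by omega) (by omega)
  exact eq_of_xFun_eq α hp hq (funext fun n => by simpa using (h n).symm)

lemma eq_of_zeroStabilizer_eq_map_conj {g : Tri p q}
    (h : zeroStabilizer (action β hp hq) =
      (zeroStabilizer (action α hp hq)).map (MulAut.conj g).toMonoidHom) : α = β := by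
  refine eq_of_xFun_conj (c := action α hp hq g 0) α hp hq fun n => ?_
  have := apply_eq_of_zeroStabilizer_eq_map_conj (action_triZ α hp hq) (action_triZ β hp hq) h
    (triX p q) n
  rwa [action_triX, action_triX] at this

end Rigidity

end Action

end Neumann

/-- For all integers p ≥ 3, q ≥ 2, the group Δ(p,q,∞) has uncountably many conjugacy
classes of Neumann subgroups, and hence uncountably many conjugacy classes of maximal
nonparabolic subgroups. -/
theorem uncountably_many_neumann_subgroups (p q : ℕ) (hp : 3 ≤ p) (hq : 2 ≤ q) :
    Uncountable (Quot (conjRel (fun M : Subgroup (Tri p q) => IsNeumann M))) ∧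
    Uncountable (Quot (conjRel (fun M : Subgroup (Tri p q) =>
      Nonparabolic M ∧ ∀ N : Subgroup (Tri p q), M < N → ∃ g ∈ N, IsParabolic g))) := by
  have hz := fun α => Neumann.action_triZ α hp hq
  have hconj := fun α β g => Neumann.eq_of_zeroStabilizer_eq_map_conj α hp hq (β := β) (g := g)
  exact ⟨uncountable_quot_conjRel _ (fun α => isNeumann_zeroStabilizer (hz α)) hconj,
    uncountable_quot_conjRel _ (fun α => ⟨nonparabolic_zeroStabilizer (hz α),
      fun _ => exists_isParabolic_of_zeroStabilizer_lt (hz α)⟩) hconj⟩
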